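/- arXiv:2501.07257 — 2 statements merged into one kernel-verified Lean document; each statement's English description precedes it below -/
import Mathlib

section
/- Let E be a real inner product space (or ℝ³). Let x, y, Δ₁ ∈ E with x = y + Δ₁, y ≠ 0, x ≠ 0, and let u, v, Δ₂ ∈ E with u = v + Δ₂. Then |⟨x/‖x‖, u⟩ − ⟨y/‖y‖, v⟩| ≤ ‖Δ₂‖ + (2‖Δ₁‖/‖y‖)·(‖v‖ + ‖Δ₂‖). -/
open RealInnerProductSpace

lemma unit_diff_bound {E : Type*} [NormedAddCommGroup E] [InnerProductSpace ℝ E]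
    (x y : E) (hy : y ≠ 0) (hx : x ≠ 0) :
    ‖‖x‖⁻¹ • x - ‖y‖⁻¹ • y‖ ≤ 2 * ‖x - y‖ / ‖y‖ := by
  have hxn : (0:ℝ) < ‖x‖ := norm_pos_iff.mpr hx
  have hyn : (0:ℝ) < ‖y‖ := norm_pos_iff.mpr hy
  have hdecomp : ‖x‖⁻¹ • x - ‖y‖⁻¹ • y
      = ‖y‖⁻¹ • (x - y) + (‖x‖⁻¹ - ‖y‖⁻¹) • x := by
    rw [smul_sub, sub_smul]; abel
  rw [hdecomp]
  have h1 : ‖‖y‖⁻¹ • (x - y)‖ = ‖x - y‖ / ‖y‖ := by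
    rw [norm_smul, norm_inv, norm_norm]; ring
  have h2 : ‖(‖x‖⁻¹ - ‖y‖⁻¹) • x‖ ≤ ‖x - y‖ / ‖y‖ := by
    rw [norm_smul, Real.norm_eq_abs]
    have : |‖x‖⁻¹ - ‖y‖⁻¹| = |‖y‖ - ‖x‖| / (‖x‖ * ‖y‖) := by
      rw [← abs_of_pos (mul_pos hxn hyn), ← abs_div]
      congr 1
      field_simp
    rw [this]
    have hle : |‖y‖ - ‖x‖| ≤ ‖x - y‖ := by
      rw [← norm_neg (x - y), neg_sub]; exact abs_norm_sub_norm_le y x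
    calc |‖y‖ - ‖x‖| / (‖x‖ * ‖y‖) * ‖x‖ = |‖y‖ - ‖x‖| / ‖y‖ := by
          field_simp
      _ ≤ ‖x - y‖ / ‖y‖ := by gcongr
  calc ‖‖y‖⁻¹ • (x - y) + (‖x‖⁻¹ - ‖y‖⁻¹) • x‖
      ≤ ‖‖y‖⁻¹ • (x - y)‖ + ‖(‖x‖⁻¹ - ‖y‖⁻¹) • x‖ := norm_add_le _ _
    _ ≤ ‖x - y‖ / ‖y‖ + ‖x - y‖ / ‖y‖ := by rw [h1]; gcongr
    _ = 2 * ‖x - y‖ / ‖y‖ := by ring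

/-- Lemma 3 (precise form): perturbing both the direction vector `y` (by `Δ₁`) and the
projected vector `v` (by `Δ₂`) changes the projection `⟨y/‖y‖, v⟩` by at most
`‖Δ₂‖ + (2‖Δ₁‖/‖y‖)(‖v‖ + ‖Δ₂‖)`. -/
theorem projection_perturbation_bound
    {E : Type*} [NormedAddCommGroup E] [InnerProductSpace ℝ E]
    (x y Δ₁ : E) (h₁ : x = y + Δ₁) (hy : y ≠ 0) (hx : x ≠ 0)
    (u v Δ₂ : E) (h₂ : u = v + Δ₂) :
    |⟪‖x‖⁻¹ • x, u⟫ - ⟪‖y‖⁻¹ • y, v⟫| ≤ ‖Δ₂‖ + (2 * ‖Δ₁‖ / ‖y‖) * (‖v‖ + ‖Δ₂‖) := by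
  have hsplit : ⟪‖x‖⁻¹ • x, u⟫ - ⟪‖y‖⁻¹ • y, v⟫
      = ⟪‖x‖⁻¹ • x - ‖y‖⁻¹ • y, u⟫ + ⟪‖y‖⁻¹ • y, Δ₂⟫ := by
    simp only [inner_sub_left, h₂, inner_add_right]; ring
  rw [hsplit]
  have hyhat : ‖‖y‖⁻¹ • y‖ = 1 := norm_smul_inv_norm hy
  have hΔ : |⟪‖y‖⁻¹ • y, Δ₂⟫| ≤ ‖Δ₂‖ := by
    calc |⟪‖y‖⁻¹ • y, Δ₂⟫| ≤ ‖‖y‖⁻¹ • y‖ * ‖Δ₂‖ := abs_real_inner_le_norm _ _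
      _ = ‖Δ₂‖ := by rw [hyhat, one_mul]
  have hu : ‖u‖ ≤ ‖v‖ + ‖Δ₂‖ := by rw [h₂]; exact norm_add_le _ _
  have hd : ‖‖x‖⁻¹ • x - ‖y‖⁻¹ • y‖ ≤ 2 * ‖Δ₁‖ / ‖y‖ := by
    have hxy : x - y = Δ₁ := by rw [h₁]; abel
    have := unit_diff_bound x y hy hx
    rwa [hxy] at this
  have h2 : |⟪‖x‖⁻¹ • x - ‖y‖⁻¹ • y, u⟫| ≤ (2 * ‖Δ₁‖ / ‖y‖) * (‖v‖ + ‖Δ₂‖) := by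
    calc |⟪‖x‖⁻¹ • x - ‖y‖⁻¹ • y, u⟫| ≤ ‖‖x‖⁻¹ • x - ‖y‖⁻¹ • y‖ * ‖u‖ :=
          abs_real_inner_le_norm _ _
      _ ≤ (2 * ‖Δ₁‖ / ‖y‖) * (‖v‖ + ‖Δ₂‖) := by
          apply mul_le_mul hd hu (norm_nonneg _)
          positivity
  calc |⟪‖x‖⁻¹ • x - ‖y‖⁻¹ • y, u⟫ + ⟪‖y‖⁻¹ • y, Δ₂⟫|
      ≤ |⟪‖x‖⁻¹ • x - ‖y‖⁻¹ • y, u⟫| + |⟪‖y‖⁻¹ • y, Δ₂⟫| := abs_add_le _ _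
    _ ≤ (2 * ‖Δ₁‖ / ‖y‖) * (‖v‖ + ‖Δ₂‖) + ‖Δ₂‖ := add_le_add h2 hΔ
    _ = ‖Δ₂‖ + (2 * ‖Δ₁‖ / ‖y‖) * (‖v‖ + ‖Δ₂‖) := by ring
end

section
/- Let r, r₀, s ∈ ℝ³ with r ≠ s and r₀ ≠ s, let σ > 0 and κ > 0. Suppose (a) for Lebesgue-almost every d ∈ ℝ, exp(−(d − ‖r − s‖)²/(2σ²)) = exp(−(d − ‖r₀ − s‖)²/(2σ²)), and (b) for every unit vector u ∈ ℝ³, exp(κ ⟨u, (r − s)/‖r − s‖⟩) = exp(κ ⟨u, (r₀ − s)/‖r₀ − s‖⟩). Then r = r₀. -/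
open Real MeasureTheory RealInnerProductSpace

set_option maxHeartbeats 1000000 in
/-- Combined position identifiability for the orbit-determination model with a radar at
position `s`: agreement of the Gaussian range density (mean `‖r - s‖`, variance `σ²`)
almost everywhere and of the von Mises–Fisher angle density (mean direction
`(r - s)/‖r - s‖`, concentration `κ`) everywhere on the unit sphere forces `r = r₀`. -/
theorem position_identifiable
    (r r₀ s : EuclideanSpace ℝ (Fin 3)) (hr : r ≠ s) (hr₀ : r₀ ≠ s)
    (σ : ℝ) (hσ : 0 < σ) (κ : ℝ) (hκ : 0 < κ)
    (hrange : ∀ᵐ d ∂(volume : Measure ℝ),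
      Real.exp (-(d - ‖r - s‖) ^ 2 / (2 * σ ^ 2))
        = Real.exp (-(d - ‖r₀ - s‖) ^ 2 / (2 * σ ^ 2)))
    (hangle : ∀ u : EuclideanSpace ℝ (Fin 3), ‖u‖ = 1 →
      Real.exp (κ * ⟪u, ‖r - s‖⁻¹ • (r - s)⟫)
        = Real.exp (κ * ⟪u, ‖r₀ - s‖⁻¹ • (r₀ - s)⟫)) :
    r = r₀ := by
  set a := ‖r - s‖ with ha
  set b := ‖r₀ - s‖ with hb
  have ha0 : a ≠ 0 := by simpa [ha, sub_eq_zero] using hr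
  have hb0 : b ≠ 0 := by simpa [hb, sub_eq_zero] using hr₀
  -- upgrade a.e. equality to everywhere equality by continuity
  have hcont : ∀ d : ℝ, Real.exp (-(d - a) ^ 2 / (2 * σ ^ 2))
      = Real.exp (-(d - b) ^ 2 / (2 * σ ^ 2)) := by
    have h1 : Continuous fun d : ℝ => Real.exp (-(d - a) ^ 2 / (2 * σ ^ 2)) := by
      continuity
    have h2 : Continuous fun d : ℝ => Real.exp (-(d - b) ^ 2 / (2 * σ ^ 2)) := by
      continuity
    have := (Continuous.ae_eq_iff_eq (volume : Measure ℝ) h1 h2).mp hrange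
    exact fun d => congrFun this d
  have hab : a = b := by
    have h0 := Real.exp_injective (hcont 0)
    have h1 := Real.exp_injective (hcont 1)
    have hσ2 : (2 * σ ^ 2) ≠ 0 := by positivity
    have e0 : (0 - a) ^ 2 = (0 - b) ^ 2 := by
      field_simp at h0; nlinarith [h0]
    have e1 : (1 - a) ^ 2 = (1 - b) ^ 2 := by
      field_simp at h1; nlinarith [h1]
    linear_combination (e0 - e1) / 2
  -- directions equal
  set x := a⁻¹ • (r - s) with hx
  set y := b⁻¹ • (r₀ - s) with hy
  have hinner : ∀ u : EuclideanSpace ℝ (Fin 3), ‖u‖ = 1 → ⟪u, x⟫ = ⟪u, y⟫ := by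
    intro u hu
    have := Real.exp_injective (hangle u hu)
    exact mul_left_cancel₀ (ne_of_gt hκ) this
  have hxy : x = y := by
    by_contra hne
    have hd : x - y ≠ 0 := sub_ne_zero.mpr hne
    have hnd : ‖x - y‖ ≠ 0 := norm_ne_zero_iff.mpr hd
    set u := ‖x - y‖⁻¹ • (x - y) with hu
    have hun : ‖u‖ = 1 := by
      rw [hu, norm_smul, norm_inv, norm_norm, inv_mul_cancel₀ hnd]
    have h := hinner u hun
    have h' : ⟪u, x - y⟫ = 0 := by
      rw [inner_sub_right, h, sub_self]
    rw [hu, real_inner_smul_left, real_inner_self_eq_norm_sq] at h'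
    have : ‖x - y‖ = 0 := by
      rcases mul_eq_zero.mp h' with h | h
      · exact absurd h (inv_ne_zero hnd)
      · nlinarith [norm_nonneg (x - y)]
    exact hnd this
  have : r - s = r₀ - s := by
    have := congrArg (fun v => a • v) hxy
    simp only [hx, hy, ← hab] at this
    rwa [smul_smul, smul_smul, mul_inv_cancel₀ ha0, one_smul, one_smul] at this
  exact sub_left_injective this
end
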